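/- arXiv:1508.00054 — 6 statements merged into one kernel-verified Lean document; each statement's English description precedes it below -/
import Mathlib

section
/- Let Q ⊣ i be an adjunction between categories with weak equivalences, with i identity on objects, such that i creates weak equivalences and each component of the counit ε is a weak equivalence. Then the class W_λ is uniquely determined: it must equal { f : Q f ∈ W_τ }. -/
open CategoryTheory

/-!
The unit `η` of `Q ⊣ i` is a weak equivalence: every object is `i A`, and at `i A` the triangle
identity `η_{iA} ≫ i ε_A = 𝟙` together with `i ε_A ∈ W_λ` (creation) gives it by 2-out-of-3.
Naturality of `η` then says `f ≫ η = η ≫ i (Q f)`, so by 2-out-of-3 again `f ∈ W_λ` iff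
`i (Q f) ∈ W_λ`, i.e. iff `Q f ∈ W_τ`.
-/

namespace CategoryTheory

variable {C : Type*} [Category C]

lemma MorphismProperty.mem_iff_map_mem_of_app_mem (W : MorphismProperty C)
    [W.HasTwoOutOfThreeProperty] {F : C ⥤ C} (α : 𝟭 C ⟶ F) (hα : ∀ X, W (α.app X))
    {X Y : C} (f : X ⟶ Y) : W f ↔ W (F.map f) := by
  have nat : f ≫ α.app Y = α.app X ≫ F.map f := α.naturality f
  constructor
  · intro hf
    have hcomp : W (α.app X ≫ F.map f) := nat ▸ W.comp_mem _ _ hf (hα Y)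
    exact W.of_precomp _ _ (hα X) hcomp
  · intro hf
    have hcomp : W (f ≫ α.app Y) := nat ▸ W.comp_mem _ _ (hα X) hf
    exact W.of_postcomp _ _ (hα Y) hcomp

lemma Adjunction.unit_app_mem_of_map_counit_app_mem {D : Type*} [Category D]
    {Q : C ⥤ D} {i : D ⥤ C} (adj : Q ⊣ i) (W : MorphismProperty C)
    [W.ContainsIdentities] [W.HasTwoOutOfThreeProperty] (hi : Function.Surjective i.obj)
    (hε : ∀ A, W (i.map (adj.counit.app A))) (X : C) : W (adj.unit.app X) := by
  obtain ⟨A, rfl⟩ := hi X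
  have htriangle : W (adj.unit.app (i.obj A) ≫ i.map (adj.counit.app A)) :=
    adj.right_triangle_components A ▸ W.id_mem _
  exact W.of_postcomp _ _ (hε A) htriangle

end CategoryTheory

theorem Wl_unique_general
    {Ct : Type*} [Category Ct] {Cl : Type*} [Category Cl]
    (Q : Cl ⥤ Ct) (i : Ct ⥤ Cl) (adj : Q ⊣ i)
    (Wt : MorphismProperty Ct) (Wl : MorphismProperty Cl)
    (hWliso : ∀ {X Y : Cl} (f : X ⟶ Y), IsIso f → Wl f)
    [Wl.HasTwoOutOfThreeProperty]
    (hObj : Function.Surjective i.obj)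
    (hCreate : ∀ {X Y : Ct} (f : X ⟶ Y), Wt f ↔ Wl (i.map f))
    (hCounit : ∀ A : Ct, Wt (adj.counit.app A)) :
    Wl = Wt.inverseImage Q := by
  have : Wl.ContainsIdentities := ⟨fun X => hWliso _ inferInstance⟩
  have hUnit := adj.unit_app_mem_of_map_counit_app_mem Wl hObj fun A => (hCreate _).1 (hCounit A)
  ext X Y f
  rw [Wl.mem_iff_map_mem_of_app_mem adj.unit hUnit f, MorphismProperty.inverseImage_iff,
    hCreate]
  rfl

/-- If `i` creates weak equivalences and each component of the
counit `ε` is a weak equivalence, then the class `Wl` is uniquely determined: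
`Wl = Q⁻¹(Wt)` on morphisms. -/
theorem Wl_unique
    {Ct : Type*} [Category Ct] {Cl : Type*} [Category Cl]
    (Q : Cl ⥤ Ct) (i : Ct ⥤ Cl) (adj : Q ⊣ i)
    (Wt : MorphismProperty Ct) (Wl : MorphismProperty Cl)
    (hWtiso : ∀ {X Y : Ct} (f : X ⟶ Y), IsIso f → Wt f)
    (hWliso : ∀ {X Y : Cl} (f : X ⟶ Y), IsIso f → Wl f)
    [Wt.HasTwoOutOfThreeProperty] [Wl.HasTwoOutOfThreeProperty]
    (hObj : Function.Surjective i.obj)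
    (hCreate : ∀ {X Y : Ct} (f : X ⟶ Y), Wt f ↔ Wl (i.map f))
    (hCounit : ∀ A : Ct, Wt (adj.counit.app A)) :
    Wl = Wt.inverseImage Q :=
  Wl_unique_general Q i adj Wt Wl hWliso hObj hCreate hCounit
end

section
/- In the setting of the previous statement (U_λ ∘ i = U_τ, i creates weak equivalences, ε ∈ W_τ, and U_τ creates W_τ from V), the functor U_λ creates W_λ from V: a morphism f of C_λ lies in W_λ if and only if U_λ f ∈ V. -/
/-!
Every object of `Cl` is of the form `i A`, and there the triangle identity
`η (i A) ≫ i (ε A) = 𝟙` together with `ε A ∈ Wt` puts `Ul η` in `V`. Naturality of `η` then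
places `Ul f` and `Ul (i (Q f)) = Ut (Q f)` on opposite sides of a commutative square whose
other two sides lie in `V`, and 2-out-of-3 transfers membership across it.
-/

namespace CategoryTheory

lemma MorphismProperty.iff_of_commSq {C : Type*} [Category C] (V : MorphismProperty C)
    [V.HasTwoOutOfThreeProperty] {A B A' B' : C} {f : A ⟶ B} {a : A ⟶ A'} {b : B ⟶ B'}
    {g : A' ⟶ B'} (sq : CommSq f a b g) (ha : V a) (hb : V b) : V f ↔ V g := by
  rw [← V.postcomp_iff f b hb, sq.w, V.precomp_iff a g ha]

lemma Adjunction.map_unit_app_mem_of_surjective {C D K : Type*} [Category C] [Category D]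
    [Category K] {Q : C ⥤ D} {i : D ⥤ C} (adj : Q ⊣ i) (hObj : Function.Surjective i.obj)
    (F : C ⥤ K) (V : MorphismProperty K) [V.ContainsIdentities] [V.HasTwoOutOfThreeProperty]
    (hε : ∀ A, V (F.map (i.map (adj.counit.app A)))) (X : C) : V (F.map (adj.unit.app X)) := by
  obtain ⟨A, rfl⟩ := hObj X
  refine V.of_postcomp _ _ (hε A) ?_
  rw [← F.map_comp, adj.right_triangle_components]
  exact F.map_id _ ▸ V.id_mem _

end CategoryTheory

open CategoryTheory

theorem Ul_creates_general
    {Ct : Type*} [Category Ct] {Cl : Type*} [Category Cl] {K : Type*} [Category K]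
    (Q : Cl ⥤ Ct) (i : Ct ⥤ Cl) (adj : Q ⊣ i)
    (Wt : MorphismProperty Ct) (Wl : MorphismProperty Cl) (V : MorphismProperty K)
    (hViso : ∀ {X Y : K} (f : X ⟶ Y), IsIso f → V f)
    [V.HasTwoOutOfThreeProperty]
    (hObj : Function.Surjective i.obj)
    (hCounit : ∀ A : Ct, Wt (adj.counit.app A))
    (Ut : Ct ⥤ K) (Ul : Cl ⥤ K) (hcomm : i ⋙ Ul = Ut)
    (hWl : ∀ {X Y : Cl} (f : X ⟶ Y), Wl f ↔ Wt (Q.map f))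
    (hUt : ∀ {X Y : Ct} (f : X ⟶ Y), Wt f ↔ V (Ut.map f)) :
    ∀ {X Y : Cl} (f : X ⟶ Y), Wl f ↔ V (Ul.map f) := by
  subst hcomm
  have : V.ContainsIdentities := ⟨fun _ => hViso _ inferInstance⟩
  have hη := adj.map_unit_app_mem_of_surjective hObj Ul V fun A => (hUt _).mp (hCounit A)
  intro X Y f
  rw [hWl, hUt]
  have sq : CommSq f (adj.unit.app X) (adj.unit.app Y) (i.map (Q.map f)) :=
    ⟨adj.unit.naturality f⟩
  exact (V.iff_of_commSq (Ul.map_commSq sq) (hη X) (hη Y)).symm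

/-- In the same setting, `Ul` creates `Wl` from `V`:
a morphism `f` of `Cl` lies in `Wl` iff `Ul f ∈ V`. -/
theorem Ul_creates
    {Ct : Type*} [Category Ct] {Cl : Type*} [Category Cl] {K : Type*} [Category K]
    (Q : Cl ⥤ Ct) (i : Ct ⥤ Cl) (adj : Q ⊣ i)
    (Wt : MorphismProperty Ct) (Wl : MorphismProperty Cl) (V : MorphismProperty K)
    (hWtiso : ∀ {X Y : Ct} (f : X ⟶ Y), IsIso f → Wt f)
    (hWliso : ∀ {X Y : Cl} (f : X ⟶ Y), IsIso f → Wl f)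
    (hViso : ∀ {X Y : K} (f : X ⟶ Y), IsIso f → V f)
    [Wt.HasTwoOutOfThreeProperty] [Wl.HasTwoOutOfThreeProperty] [V.HasTwoOutOfThreeProperty]
    (hObj : Function.Surjective i.obj)
    (hCreate : ∀ {X Y : Ct} (f : X ⟶ Y), Wt f ↔ Wl (i.map f))
    (hCounit : ∀ A : Ct, Wt (adj.counit.app A))
    (Ut : Ct ⥤ K) (Ul : Cl ⥤ K) (hcomm : i ⋙ Ul = Ut)
    (hWl : ∀ {X Y : Cl} (f : X ⟶ Y), Wl f ↔ Wt (Q.map f))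
    (hUt : ∀ {X Y : Ct} (f : X ⟶ Y), Wt f ↔ V (Ut.map f)) :
    ∀ {X Y : Cl} (f : X ⟶ Y), Wl f ↔ V (Ul.map f) :=
  Ul_creates_general Q i adj Wt Wl V hViso hObj hCounit Ut Ul hcomm hWl hUt
end

section
/- Let K be a 2-category with a terminal object (in the Cat-enriched sense) and pushouts, let I be a small category with a zero object 0, and let [I,K]_red denote the full sub-2-category of functors X : I → K with X(0) ≅ terminal. Then the inclusion j : [I,K]_red → [I,K] has a left adjoint R, where R X(a) is the pushout of * ← X(0) → X(a) along the unique map X(0 → a), and the components of the unit η_X : X → jRX at any reduced diagram X are isomorphisms. -/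
open CategoryTheory Limits

/-- Reduced diagrams: functors `X : I ⥤ K` with `X O` isomorphic to the terminal
object, where `O` is the zero object of `I`. -/
def ReducedDiagram (I : Type*) [Category I] (K : Type*) [Category K] [HasTerminal K]
    (O : I) : Type _ :=
  ObjectProperty.FullSubcategory (fun X : I ⥤ K => Nonempty (X.obj O ≅ ⊤_ K))

instance (I : Type*) [Category I] (K : Type*) [Category K] [HasTerminal K] (O : I) :
    Category (ReducedDiagram I K O) :=
  ObjectProperty.FullSubcategory.category _
open CategoryTheory Limits

section Aux




attribute [local simp] pushout.inl_desc pushout.inr_desc pushout.inl_desc_assoc pushout.inr_desc_assoc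

variable {I : Type*} [SmallCategory I] {K : Type*} [Category K]
  [HasTerminal K] [HasPushouts K] (O : I) (hO : IsInitial O)

lemma RedAux.id_ext {X : ReducedDiagram I K O} {h : X ⟶ X} (H : h.hom = 𝟙 X.obj) : h = 𝟙 X :=
  InducedCategory.hom_ext H

lemma RedAux.comp_ext {X Y Z : ReducedDiagram I K O} {f : X ⟶ Y} {g : Y ⟶ Z} {h : X ⟶ Z}
    (H : h.hom = f.hom ≫ g.hom) : h = f ≫ g :=
  InducedCategory.hom_ext H

/-- The pointwise-pushout functor underlying the reflection. -/
@[simps, reducible]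
noncomputable def RedAux.Rfun (X : I ⥤ K) : I ⥤ K where
  obj a := pushout (X.map (hO.to a)) (terminal.from (X.obj O))
  map {a b} f := pushout.map _ _ _ _ (X.map f) (𝟙 _) (𝟙 _)
    (by rw [← X.map_comp, hO.hom_ext (hO.to a ≫ f) (hO.to b), Category.id_comp])
    (by simp)
  map_id a := by apply pushout.hom_ext <;> simp
  map_comp f g := by apply pushout.hom_ext <;> simp

lemma RedAux.Rfun_reduced (X : I ⥤ K) :
    Nonempty ((RedAux.Rfun O hO X).obj O ≅ ⊤_ K) := by
  have h : X.map (hO.to O) = 𝟙 _ := by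
    rw [hO.hom_ext (hO.to O) (𝟙 O), X.map_id]
  have : IsIso (X.map (hO.to O)) := by rw [h]; infer_instance
  have : IsIso (pushout.inr (X.map (hO.to O)) (terminal.from (X.obj O))) :=
    pushout_inr_iso_of_left_iso _ _
  exact ⟨(asIso (pushout.inr (X.map (hO.to O)) (terminal.from (X.obj O)))).symm⟩

/-- The reflection functor. -/
@[simps, reducible]
noncomputable def RedAux.R : (I ⥤ K) ⥤ ReducedDiagram I K O where
  obj X := ⟨RedAux.Rfun O hO X, RedAux.Rfun_reduced O hO X⟩
  map {X Y} φ :=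
    ⟨{ app := fun a => pushout.map _ _ _ _ (φ.app a) (𝟙 _) (φ.app O)
        (φ.naturality _) (by simp)
       naturality := fun a b f => by apply pushout.hom_ext <;> simp }⟩
  map_id X := by
    apply RedAux.id_ext
    refine NatTrans.ext (funext fun a => ?_)
    apply pushout.hom_ext <;> simp
  map_comp f g := by
    apply RedAux.comp_ext
    refine NatTrans.ext (funext fun a => ?_)
    apply pushout.hom_ext <;> simp

/-- The unit. -/
@[simps]
noncomputable def RedAux.eta (X : I ⥤ K) : X ⟶ (RedAux.Rfun O hO X) where
  app a := pushout.inl _ _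
  naturality a b f := by simp

noncomputable def RedAux.isTerminal_obj (Y : ReducedDiagram I K O) : IsTerminal (Y.obj.obj O) :=
  IsTerminal.ofIso terminalIsTerminal Y.property.some.symm

/-- Descend a map out of the reflection. -/
@[simps]
noncomputable def RedAux.descNat (X : I ⥤ K) (Y : ReducedDiagram I K O) (ψ : X ⟶ Y.obj) :
    RedAux.Rfun O hO X ⟶ Y.obj where
  app a := pushout.desc (ψ.app a)
      (Y.property.some.inv ≫ Y.obj.map (hO.to a))
      (by
        have h : ψ.app O = terminal.from (X.obj O) ≫ Y.property.some.inv :=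
          (RedAux.isTerminal_obj O Y).hom_ext _ _
        rw [ψ.naturality, h, Category.assoc])
  naturality a b f := by
    apply pushout.hom_ext
    · simp [ψ.naturality]
    · simp [← Y.obj.map_comp, hO.hom_ext (hO.to a ≫ f) (hO.to b)]

/-- The adjunction. -/
noncomputable def RedAux.adj : RedAux.R O hO ⊣ ObjectProperty.ι
    (fun X : I ⥤ K => Nonempty (X.obj O ≅ ⊤_ K)) :=
  Adjunction.mkOfHomEquiv
    { homEquiv := fun X Y =>
        { toFun := fun φ => RedAux.eta O hO X ≫ φ.hom
          invFun := fun ψ => ⟨RedAux.descNat O hO X Y ψ⟩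
          left_inv := fun φ => by
            apply ObjectProperty.hom_ext
            refine NatTrans.ext (funext fun a => ?_)
            apply pushout.hom_ext
            · simp [RedAux.eta]
            · have h1 : pushout.inr (X.map (hO.to O)) (terminal.from (X.obj O)) ≫
                  φ.hom.app O = Y.property.some.inv :=
                (RedAux.isTerminal_obj O Y).hom_ext _ _
              have h2 := φ.hom.naturality (hO.to a)
              have h3 : pushout.inr (X.map (hO.to O)) (terminal.from (X.obj O)) ≫
                  (RedAux.Rfun O hO X).map (hO.to a) =
                  pushout.inr (X.map (hO.to a)) (terminal.from (X.obj O)) := by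
                simp
              calc pushout.inr (X.map (hO.to a)) (terminal.from (X.obj O)) ≫
                    (RedAux.descNat O hO X Y (RedAux.eta O hO X ≫ φ.hom)).app a
                  = Y.property.some.inv ≫ Y.obj.map (hO.to a) := by simp
                _ = (pushout.inr (X.map (hO.to O)) (terminal.from (X.obj O)) ≫ φ.hom.app O) ≫
                      Y.obj.map (hO.to a) := by rw [h1]
                _ = pushout.inr (X.map (hO.to O)) (terminal.from (X.obj O)) ≫
                      (RedAux.Rfun O hO X).map (hO.to a) ≫ φ.hom.app a := by
                      exact (Category.assoc _ _ _).trans (congrArg _ h2.symm)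
                _ = pushout.inr (X.map (hO.to a)) (terminal.from (X.obj O)) ≫ φ.hom.app a := by
                      exact (Category.assoc _ _ _).symm.trans (congrArg (· ≫ _) h3)
          right_inv := fun ψ => by
            refine NatTrans.ext (funext fun a => ?_)
            simp [RedAux.eta] }
      homEquiv_naturality_left_symm := fun {X' X Y} f g => by
        apply RedAux.comp_ext
        refine NatTrans.ext (funext fun a => ?_)
        apply pushout.hom_ext <;> simp
      homEquiv_naturality_right := fun {X Y Y'} f g => by
        refine NatTrans.ext (funext fun a => ?_)
        simp; rfl }

end Aux

/-- If `I` is small with a zero object `O` and `K` has a terminal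
object and pushouts, the inclusion of reduced diagrams has a left adjoint `R` where
`R X a` is the pushout of `* ← X O → X a`, and the unit is an isomorphism at every
reduced diagram. -/
theorem reduced_reflection
    {I : Type*} [SmallCategory I] {K : Type*} [Category K]
    [HasTerminal K] [HasPushouts K]
    (O : I) (hO : IsInitial O) (hO' : IsTerminal O) :
    ∃ (R : (I ⥤ K) ⥤ ReducedDiagram I K O)
      (adj : R ⊣ ObjectProperty.ι _),
      (∀ (X : I ⥤ K) (a : I),
        Nonempty ((R.obj X).obj.obj a ≅
          pushout (X.map (hO.to a)) (terminal.from (X.obj O)))) ∧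
      (∀ X : ReducedDiagram I K O,
        IsIso (adj.unit.app ((ObjectProperty.ι _).obj X))) := by
  refine ⟨RedAux.R O hO, RedAux.adj O hO, fun X a => ⟨Iso.refl _⟩, fun X => ?_⟩
  have hfrom : IsIso (terminal.from (X.obj.obj O)) := by
    rw [show terminal.from (X.obj.obj O) = X.property.some.hom from
      terminal.hom_ext _ _]
    infer_instance
  have happ : ∀ a, IsIso ((RedAux.eta O hO X.obj).app a) := fun a => by
    rw [RedAux.eta_app]
    exact pushout_inl_iso_of_right_iso _ _
  have heta : IsIso (RedAux.eta O hO X.obj) := NatIso.isIso_of_isIso_app _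
  have hu : (RedAux.adj O hO).unit.app ((ObjectProperty.ι _).obj X) =
      RedAux.eta O hO X.obj ≫ 𝟙 _ := rfl
  rw [hu]
  infer_instance
end

section
/- Let I be a small category with a zero object, and K a complete and cocomplete category. The full subcategory of reduced diagrams [I,K]_red ⊆ [I,K] is a reflective subcategory (the reflector R exists), and hence [I,K]_red is complete and cocomplete: limits are computed levelwise (as in [I,K]), and colimits are computed by applying R to the colimit in [I,K]. -/
open CategoryTheory Limits

/-!
The reflection of `X` is the pushout `R X` of `const (⊤_ K) ← const (X O) → X`, the right leg
being `X` applied to the arrows out of the initial object `O`. Evaluated at `O` this leg is an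
isomorphism, so `(R X) O ≅ ⊤_ K`. A natural transformation from a constant diagram into a reduced
diagram `Y` is determined by its component at `O`, a map into `Y O ≅ ⊤_ K`; hence such maps are
unique and always exist for the constant diagram at `⊤_ K`, so maps `R X ⟶ Y` correspond to
maps `X ⟶ Y`. Completeness and cocompleteness then hold in any reflective subcategory of a
complete and cocomplete category.
-/

namespace ReducedDiagram

variable {I : Type*} [Category I] {K : Type*} [Category K] [HasTerminal K] {O : I}
  (hO : IsInitial O)

noncomputable def fromConstTerminal (Y : ReducedDiagram I K O) :
    (Functor.const I).obj (⊤_ K) ⟶ Y.obj :=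
  (Functor.const I).map Y.property.some.inv ≫ (coneOfDiagramInitial hO Y.obj).π

include hO in
lemma const_hom_ext {T : K} {Y : ReducedDiagram I K O}
    (f g : (Functor.const I).obj T ⟶ Y.obj) : f = g := by
  have h_zero : f.app O = g.app O := by
    rw [← cancel_mono Y.property.some.hom]
    exact terminal.hom_ext _ _
  ext a
  have hf := f.naturality (hO.to a)
  have hg := g.naturality (hO.to a)
  simp only [Functor.const_obj_obj, Functor.const_obj_map, Category.id_comp] at hf hg
  rw [hf, hg, h_zero]

variable [HasPushouts K]

noncomputable def reductionObj (X : I ⥤ K) : I ⥤ K :=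
  pushout (coneOfDiagramInitial hO X).π ((Functor.const I).map (terminal.from (X.obj O)))

lemma reductionObj_reduced (X : I ⥤ K) : Nonempty ((reductionObj hO X).obj O ≅ ⊤_ K) := by
  have : IsIso ((coneOfDiagramInitial hO X).π.app O) := by
    rw [coneOfDiagramInitial_π_app, hO.hom_ext (hO.to O) (𝟙 O), X.map_id]
    exact IsIso.id _
  exact ⟨(PreservesPushout.iso ((evaluation I K).obj O) _ _).symm ≪≫
    (asIso (pushout.inr ((coneOfDiagramInitial hO X).π.app O) (terminal.from (X.obj O)))).symm⟩

noncomputable def reductionHomEquiv (X : I ⥤ K) (Y : ReducedDiagram I K O) :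
    ((⟨reductionObj hO X, reductionObj_reduced hO X⟩ : ReducedDiagram I K O) ⟶ Y) ≃
      (X ⟶ Y.obj) where
  toFun f := pushout.inl _ _ ≫ f.hom
  invFun h := ObjectProperty.homMk (pushout.desc h (fromConstTerminal hO Y) (const_hom_ext hO _ _))
  left_inv f := by
    ext : 1
    exact pushout.hom_ext (pushout.inl_desc _ _ _) (const_hom_ext hO _ _)
  right_inv h := pushout.inl_desc _ _ _

noncomputable def reduction : (I ⥤ K) ⥤ ReducedDiagram I K O :=
  Adjunction.leftAdjointOfEquiv (G := ObjectProperty.ι _) (reductionHomEquiv hO)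
    fun _ _ _ _ _ => (Category.assoc (obj := I ⥤ K) _ _ _).symm

noncomputable def reductionAdjunction :
    reduction hO ⊣ ObjectProperty.ι (fun X : I ⥤ K => Nonempty (X.obj O ≅ ⊤_ K)) :=
  Adjunction.adjunctionOfEquivLeft (G := ObjectProperty.ι _) _ _

end ReducedDiagram

theorem reduced_reflective_complete_cocomplete_general
    {I : Type v} [SmallCategory I] {K : Type u} [Category.{v} K]
    [HasLimits K] [HasColimits K]
    (O : I) (hO : IsInitial O) :
    ∃ (R : (I ⥤ K) ⥤ ReducedDiagram I K O)
      (_ : R ⊣ ObjectProperty.ι _),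
      HasLimits (ReducedDiagram I K O) ∧ HasColimits (ReducedDiagram I K O) ∧
      Nonempty (PreservesLimits (ObjectProperty.ι
        (fun X : I ⥤ K => Nonempty (X.obj O ≅ ⊤_ K)))) ∧
      Nonempty (PreservesColimits R) := by
  let P : ObjectProperty (I ⥤ K) := fun X => Nonempty (X.obj O ≅ ⊤_ K)
  let adj := ReducedDiagram.reductionAdjunction (K := K) hO
  have : Reflective P.ι := ⟨_, adj⟩
  -- `(e :)` keeps the category instance of `P.FullSubcategory`, under which `Reflective P.ι` is found
  exact ⟨_, adj, (hasLimits_of_reflective P.ι :), (hasColimits_of_reflective P.ι :),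
    ⟨adj.rightAdjoint_preservesLimits⟩, ⟨adj.leftAdjoint_preservesColimits⟩⟩

/-- For `I` small with a zero object and `K` complete and
cocomplete, the reduced diagrams form a reflective subcategory of `[I,K]`, which is
therefore complete and cocomplete; limits are computed levelwise (the inclusion
preserves them) and colimits are obtained by applying the reflector `R` to the
colimit in `[I,K]` (`R`, being a left adjoint, preserves colimits). -/
theorem reduced_reflective_complete_cocomplete
    {I : Type v} [SmallCategory I] {K : Type u} [Category.{v} K]
    [HasLimits K] [HasColimits K]
    (O : I) (hO : IsInitial O) (hO' : IsTerminal O) :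
    ∃ (R : (I ⥤ K) ⥤ ReducedDiagram I K O)
      (_ : R ⊣ ObjectProperty.ι _),
      HasLimits (ReducedDiagram I K O) ∧ HasColimits (ReducedDiagram I K O) ∧
      Nonempty (PreservesLimits (ObjectProperty.ι
        (fun X : I ⥤ K => Nonempty (X.obj O ≅ ⊤_ K)))) ∧
      Nonempty (PreservesColimits R) :=
  reduced_reflective_complete_cocomplete_general O hO
end

section
/- The colax limit (comma construction) of a lax monoidal functor carries a monoidal structure: given a lax monoidal functor f : A → B between monoidal categories, the category C whose objects are triples (a, b, σ : b → f(a)) and whose morphisms are pairs of morphisms making the evident square commute, admits a monoidal product defined by (a,b,σ) ⊗ (a',b',σ') = (a ⊗ a', b ⊗ b', φ ∘ (σ ⊗ σ')) where φ : f(a) ⊗ f(a') → f(a ⊗ a') is the lax structure map of f, with unit (1_A, 1_B, f_0 : 1_B → f(1_A)); moreover the projections C → A and C → B are strict (strong) monoidal functors. -/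
open CategoryTheory MonoidalCategory

section

variable {A : Type*} [Category A] [MonoidalCategory A]
  {B : Type*} [Category B] [MonoidalCategory B]
  (f : A ⥤ B) [f.LaxMonoidal]

/-- The tensor product on the colax limit (comma category) of a lax monoidal
functor `f : A ⥤ B`: `(a,b,σ) ⊗ (a',b',σ') = (a ⊗ a', b ⊗ b', μ ∘ (σ ⊗ σ'))`. -/
def colaxLimitTensorObj (x y : Comma (𝟭 B) f) : Comma (𝟭 B) f where
  left := x.left ⊗ y.left
  right := x.right ⊗ y.right
  hom := (x.hom ⊗ₘ y.hom) ≫ Functor.LaxMonoidal.μ f x.right y.right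

/-- The unit object `(𝟙_A, 𝟙_B, f₀ : 𝟙_B ⟶ f(𝟙_A))` of the colax limit. -/
def colaxLimitUnit : Comma (𝟭 B) f where
  left := 𝟙_ B
  right := 𝟙_ A
  hom := Functor.LaxMonoidal.ε f

@[simps] def colaxStruct : MonoidalCategoryStruct (Comma (𝟭 B) f) where
  tensorObj := colaxLimitTensorObj f
  tensorUnit := colaxLimitUnit f
  whiskerLeft x {y z} g :=
    { left := x.left ◁ g.left
      right := x.right ◁ g.right
      w := by
        simp only [colaxLimitTensorObj, MonoidalCategory.tensorHom_def, Functor.id_map, Category.assoc]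
        rw [whisker_exchange_assoc, ← MonoidalCategory.whiskerLeft_comp_assoc,
          show g.left ≫ z.hom = y.hom ≫ f.map g.right by simpa using g.w,
          MonoidalCategory.whiskerLeft_comp_assoc, Functor.LaxMonoidal.μ_natural_right] }
  whiskerRight {y z} g x :=
    { left := g.left ▷ x.left
      right := g.right ▷ x.right
      w := by
        simp only [colaxLimitTensorObj, tensorHom_def', Functor.id_map, Category.assoc]
        rw [← whisker_exchange_assoc, ← comp_whiskerRight_assoc,
          show g.left ≫ z.hom = y.hom ≫ f.map g.right by simpa using g.w,
          comp_whiskerRight_assoc, Functor.LaxMonoidal.μ_natural_left] }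
  associator x y z := Comma.isoMk (α_ _ _ _) (α_ _ _ _) (by
    simp only [colaxLimitTensorObj, MonoidalCategory.tensorHom_def, tensorHom_def', Functor.id_map,
      Category.assoc, comp_whiskerRight, MonoidalCategory.whiskerLeft_comp, whisker_assoc]
    conv_rhs => rw [← whisker_exchange_assoc, ← associator_inv_naturality_right_assoc,
      Functor.LaxMonoidal.associativity f, Iso.inv_hom_id_assoc]
    rw [← associator_naturality_left_assoc] )
  tensorHom {x₁ y₁ x₂ y₂} g h :=
    { left := g.left ⊗ₘ h.left
      right := g.right ⊗ₘ h.right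
      w := by
        simp only [colaxLimitTensorObj, Functor.id_map, Category.assoc]
        rw [tensorHom_comp_tensorHom_assoc,
          show g.left ≫ y₁.hom = x₁.hom ≫ f.map g.right by simpa using g.w,
          show h.left ≫ y₂.hom = x₂.hom ≫ f.map h.right by simpa using h.w,
          ← tensorHom_comp_tensorHom_assoc, Functor.LaxMonoidal.μ_natural] }
  leftUnitor x := Comma.isoMk (λ_ _) (λ_ _) (by
    simp [colaxLimitTensorObj, colaxLimitUnit, tensorHom_def'])
  rightUnitor x := Comma.isoMk (ρ_ _) (ρ_ _) (by
    simp [colaxLimitTensorObj, colaxLimitUnit, MonoidalCategory.tensorHom_def])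

attribute [-simp] colaxStruct_associator colaxStruct_leftUnitor colaxStruct_rightUnitor
@[simp] lemma colax_isoMk_hom_left {x y : Comma (𝟭 B) f} (l : x.left ≅ y.left) (r : x.right ≅ y.right)
    (h : (𝟭 B).map l.hom ≫ y.hom = x.hom ≫ f.map r.hom) : (Comma.isoMk l r h).hom.left = l.hom := rfl
@[simp] lemma colax_isoMk_hom_right {x y : Comma (𝟭 B) f} (l : x.left ≅ y.left) (r : x.right ≅ y.right)
    (h : (𝟭 B).map l.hom ≫ y.hom = x.hom ≫ f.map r.hom) : (Comma.isoMk l r h).hom.right = r.hom := rfl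
attribute [local instance] colaxStruct

@[simp] lemma colax_tensorObj_left (x y : Comma (𝟭 B) f) : (x ⊗ y).left = x.left ⊗ y.left := rfl
@[simp] lemma colax_tensorObj_right (x y : Comma (𝟭 B) f) : (x ⊗ y).right = x.right ⊗ y.right := rfl
@[simp] lemma colax_tensorUnit_left : (𝟙_ (Comma (𝟭 B) f)).left = 𝟙_ B := rfl
@[simp] lemma colax_tensorUnit_right : (𝟙_ (Comma (𝟭 B) f)).right = 𝟙_ A := rfl
@[simp] lemma colax_id_left (x : Comma (𝟭 B) f) : (𝟙 x : x ⟶ x).left = 𝟙 x.left := rfl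
@[simp] lemma colax_id_right (x : Comma (𝟭 B) f) : (𝟙 x : x ⟶ x).right = 𝟙 x.right := rfl
@[simp] lemma colax_associator_hom_left (x y z : Comma (𝟭 B) f) :
    (α_ x y z).hom.left = (α_ x.left y.left z.left).hom := rfl
@[simp] lemma colax_associator_hom_right (x y z : Comma (𝟭 B) f) :
    (α_ x y z).hom.right = (α_ x.right y.right z.right).hom := rfl
@[simp] lemma colax_leftUnitor_hom_left (x : Comma (𝟭 B) f) :
    (λ_ x).hom.left = (λ_ x.left).hom := rfl
@[simp] lemma colax_leftUnitor_hom_right (x : Comma (𝟭 B) f) :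
    (λ_ x).hom.right = (λ_ x.right).hom := rfl
@[simp] lemma colax_rightUnitor_hom_left (x : Comma (𝟭 B) f) :
    (ρ_ x).hom.left = (ρ_ x.left).hom := rfl
@[simp] lemma colax_rightUnitor_hom_right (x : Comma (𝟭 B) f) :
    (ρ_ x).hom.right = (ρ_ x.right).hom := rfl

def colaxLimitMonoidal : MonoidalCategory (Comma (𝟭 B) f) where
  tensorHom_def g h := by ext <;> simp [colaxLimitTensorObj, MonoidalCategory.tensorHom_def]
  id_tensorHom_id x y := by ext <;> simp [colaxLimitTensorObj]
  tensorHom_comp_tensorHom g₁ g₂ h₁ h₂ := by ext <;> simp [colaxLimitTensorObj]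
  whiskerLeft_id x y := by ext <;> simp [colaxLimitTensorObj]
  id_whiskerRight x y := by ext <;> simp [colaxLimitTensorObj]
  associator_naturality g h k := by
    ext <;> dsimp [Comma.isoMk, colaxLimitTensorObj] <;> simp [associator_naturality]
  leftUnitor_naturality g := by
    ext <;> dsimp [Comma.isoMk, colaxLimitUnit, colaxLimitTensorObj] <;> simp
  rightUnitor_naturality g := by
    ext <;> dsimp [Comma.isoMk, colaxLimitUnit, colaxLimitTensorObj] <;> simp
  pentagon w x y z := by
    ext <;> dsimp [Comma.isoMk, colaxLimitTensorObj] <;> simp [pentagon]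
  triangle x y := by
    ext <;> simp [colaxLimitUnit]

attribute [local instance] colaxLimitMonoidal

@[simp] lemma colaxM_tensorObj_left (x y : Comma (𝟭 B) f) : (@MonoidalCategoryStruct.tensorObj _ _ (colaxLimitMonoidal f).toMonoidalCategoryStruct x y).left = x.left ⊗ y.left := rfl
@[simp] lemma colaxM_tensorObj_right (x y : Comma (𝟭 B) f) : (@MonoidalCategoryStruct.tensorObj _ _ (colaxLimitMonoidal f).toMonoidalCategoryStruct x y).right = x.right ⊗ y.right := rfl
@[simp] lemma colaxM_tensorUnit_left : (@MonoidalCategoryStruct.tensorUnit _ _ (colaxLimitMonoidal f).toMonoidalCategoryStruct).left = 𝟙_ B := rfl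
@[simp] lemma colaxM_tensorUnit_right : (@MonoidalCategoryStruct.tensorUnit _ _ (colaxLimitMonoidal f).toMonoidalCategoryStruct).right = 𝟙_ A := rfl
@[simp] lemma colaxM_whiskerLeft_left (x : Comma (𝟭 B) f) {y z : Comma (𝟭 B) f} (g : y ⟶ z) :
    (@MonoidalCategoryStruct.whiskerLeft _ _ (colaxLimitMonoidal f).toMonoidalCategoryStruct x _ _ g).left = x.left ◁ g.left := rfl
@[simp] lemma colaxM_whiskerLeft_right (x : Comma (𝟭 B) f) {y z : Comma (𝟭 B) f} (g : y ⟶ z) :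
    (@MonoidalCategoryStruct.whiskerLeft _ _ (colaxLimitMonoidal f).toMonoidalCategoryStruct x _ _ g).right = x.right ◁ g.right := rfl
@[simp] lemma colaxM_whiskerRight_left (x : Comma (𝟭 B) f) {y z : Comma (𝟭 B) f} (g : y ⟶ z) :
    (@MonoidalCategoryStruct.whiskerRight _ _ (colaxLimitMonoidal f).toMonoidalCategoryStruct _ _ g x).left = g.left ▷ x.left := rfl
@[simp] lemma colaxM_whiskerRight_right (x : Comma (𝟭 B) f) {y z : Comma (𝟭 B) f} (g : y ⟶ z) :
    (@MonoidalCategoryStruct.whiskerRight _ _ (colaxLimitMonoidal f).toMonoidalCategoryStruct _ _ g x).right = g.right ▷ x.right := rfl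
@[simp] lemma colaxM_associator_hom_left (x y z : Comma (𝟭 B) f) :
    (@MonoidalCategoryStruct.associator _ _ (colaxLimitMonoidal f).toMonoidalCategoryStruct x y z).hom.left = (α_ x.left y.left z.left).hom := rfl
@[simp] lemma colaxM_associator_hom_right (x y z : Comma (𝟭 B) f) :
    (@MonoidalCategoryStruct.associator _ _ (colaxLimitMonoidal f).toMonoidalCategoryStruct x y z).hom.right = (α_ x.right y.right z.right).hom := rfl
@[simp] lemma colaxM_leftUnitor_hom_left (x : Comma (𝟭 B) f) :
    (@MonoidalCategoryStruct.leftUnitor _ _ (colaxLimitMonoidal f).toMonoidalCategoryStruct x).hom.left = (λ_ x.left).hom := rfl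
@[simp] lemma colaxM_leftUnitor_hom_right (x : Comma (𝟭 B) f) :
    (@MonoidalCategoryStruct.leftUnitor _ _ (colaxLimitMonoidal f).toMonoidalCategoryStruct x).hom.right = (λ_ x.right).hom := rfl
@[simp] lemma colaxM_rightUnitor_hom_left (x : Comma (𝟭 B) f) :
    (@MonoidalCategoryStruct.rightUnitor _ _ (colaxLimitMonoidal f).toMonoidalCategoryStruct x).hom.left = (ρ_ x.left).hom := rfl
@[simp] lemma colaxM_rightUnitor_hom_right (x : Comma (𝟭 B) f) :
    (@MonoidalCategoryStruct.rightUnitor _ _ (colaxLimitMonoidal f).toMonoidalCategoryStruct x).hom.right = (ρ_ x.right).hom := rfl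

def sndCore : Functor.CoreMonoidal (Comma.snd (𝟭 B) f) where
  εIso := Iso.refl _
  μIso _ _ := Iso.refl _
  μIso_hom_natural_left := by intros; dsimp [Comma.snd, Comma.fst]; simp
  μIso_hom_natural_right := by intros; dsimp [Comma.snd, Comma.fst]; simp
  associativity := by intros; dsimp [Comma.snd, Comma.fst]; simp
  left_unitality := by intros; dsimp [Comma.snd, Comma.fst]; simp
  right_unitality := by intros; dsimp [Comma.snd, Comma.fst]; simp

def fstCore : Functor.CoreMonoidal (Comma.fst (𝟭 B) f) where
  εIso := Iso.refl _
  μIso _ _ := Iso.refl _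
  μIso_hom_natural_left := by intros; dsimp [Comma.snd, Comma.fst]; simp
  μIso_hom_natural_right := by intros; dsimp [Comma.snd, Comma.fst]; simp
  associativity := by intros; dsimp [Comma.snd, Comma.fst]; simp
  left_unitality := by intros; dsimp [Comma.snd, Comma.fst]; simp
  right_unitality := by intros; dsimp [Comma.snd, Comma.fst]; simp

/-- The colax limit (comma category) of a lax monoidal functor
`f : A ⥤ B` carries a monoidal structure with the componentwise tensor product
`(a,b,σ) ⊗ (a',b',σ') = (a ⊗ a', b ⊗ b', μ ∘ (σ ⊗ σ'))` and unit
`(𝟙_A, 𝟙_B, f₀)`, and the two projections are (strong, in particular strict)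
monoidal functors. -/
theorem colaxLimit_monoidal :
    ∃ inst : MonoidalCategory (Comma (𝟭 B) f),
      inst.tensorObj = colaxLimitTensorObj f ∧
      inst.tensorUnit = colaxLimitUnit f ∧
      Nonempty (@Functor.Monoidal (Comma (𝟭 B) f) _ inst A _ _ (Comma.snd (𝟭 B) f)) ∧
      Nonempty (@Functor.Monoidal (Comma (𝟭 B) f) _ inst B _ _ (Comma.fst (𝟭 B) f)) := by
  exact ⟨colaxLimitMonoidal f, rfl, rfl, ⟨(sndCore f).toMonoidal⟩, ⟨(fstCore f).toMonoidal⟩⟩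

end
end

section
/- Pointwise adjoints assemble to a lax natural transformation: let X, Y : I → Cat be functors (strict diagrams), f : X ⇒ Y a strict natural transformation, and suppose for each object a of I an adjunction f_a ⊣ g_a with unit η_a and counit ε_a. Then defining, for r : a → b in I, the natural transformation ḡ_r : X(r) ∘ g_a ⇒ g_b ∘ Y(r) as the composite X(r) g_a ⇒ g_b f_b X(r) g_a = g_b Y(r) f_a g_a ⇒ g_b Y(r) (whiskering η_b on the left, then the naturality equality f_b X(r) = Y(r) f_a, then whiskering ε_a on the right), the data (g_a, ḡ_r) satisfies the axioms of a lax natural transformation Y ⇒ X. -/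
/-! The 2-cell `ḡ_r` is the mate, under `f_a ⊣ g_a` and `f_b ⊣ g_b`, of the identity square
`f_b ∘ X(r) = Y(r) ∘ f_a`. Taking mates is compatible with pasting of squares, and by functoriality
of `X` and `Y` the square of `r ≫ s` is the pasting of the squares of `r` and `s`: this is the
composition axiom. For `r = 𝟙 a` the square is an identity, whose mate is the identity by a
triangle identity. -/

open CategoryTheory

section

variable {I : Type*} [Category I] {X Y : I ⥤ Cat}
  (f : X ⟶ Y)
  (g : ∀ a : I, ↥(Y.obj a) ⥤ ↥(X.obj a))
  (adj : ∀ a : I, ((f.app a).toFunctor : ↥(X.obj a) ⥤ ↥(Y.obj a)) ⊣ g a)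

/-- The strict naturality of `f` rewritten for composites of functors. -/
theorem natEq {a b : I} (r : a ⟶ b) :
    (((X.map r).toFunctor : ↥(X.obj a) ⥤ ↥(X.obj b)) ⋙ (f.app b).toFunctor : ↥(X.obj a) ⥤ ↥(Y.obj b)) =
      ((f.app a).toFunctor : ↥(X.obj a) ⥤ ↥(Y.obj a)) ⋙ (Y.map r).toFunctor :=
  congrArg Cat.Hom.toFunctor (f.naturality r)

/-- The candidate lax-naturality 2-cell `ḡ_r : X(r) ∘ g_a ⇒ g_b ∘ Y(r)`, given by
whiskering the unit `η_b`, the strict naturality of `f`, and the counit `ε_a`. -/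
def gbar {a b : I} (r : a ⟶ b) :
    (g a ⋙ ((X.map r).toFunctor : ↥(X.obj a) ⥤ ↥(X.obj b)) : ↥(Y.obj a) ⥤ ↥(X.obj b)) ⟶
      ((Y.map r).toFunctor : ↥(Y.obj a) ⥤ ↥(Y.obj b)) ⋙ g b :=
  Functor.whiskerLeft (g a ⋙ ((X.map r).toFunctor : ↥(X.obj a) ⥤ ↥(X.obj b))) (adj b).unit ≫
    eqToHom (by
      change (g a ⋙ (((X.map r).toFunctor : ↥(X.obj a) ⥤ ↥(X.obj b)) ⋙ (f.app b).toFunctor) ⋙ g b :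
          ↥(Y.obj a) ⥤ ↥(X.obj b)) =
        g a ⋙ (((f.app a).toFunctor : ↥(X.obj a) ⥤ ↥(Y.obj a)) ⋙ (Y.map r).toFunctor) ⋙ g b
      rw [natEq f r]) ≫
    Functor.whiskerRight (adj a).counit (((Y.map r).toFunctor : ↥(Y.obj a) ⥤ ↥(Y.obj b)) ⋙ g b)

end

open Functor

open scoped TwoSquare

section Mates

variable {A B C D : Type*} [Category A] [Category B] [Category C] [Category D]

lemma mateEquiv_eqToHom_of_eq_id {L : A ⥤ B} {R : B ⥤ A} (adj : L ⊣ R)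
    {G : A ⥤ A} {H : B ⥤ B} (hG : G = 𝟭 A) (hH : H = 𝟭 B) (h : G ⋙ L = L ⋙ H) :
    mateEquiv adj adj (.mk _ _ _ _ (eqToHom h)) = eqToHom (by rw [hG, hH]; rfl) := by
  subst hG hH
  ext b
  rw [mateEquiv_apply]
  simp

variable {E F : Type*} [Category E] [Category F]

lemma mateEquiv_eqToHom_of_eq_comp
    {L₁ : A ⥤ B} {R₁ : B ⥤ A} {L₂ : C ⥤ D} {R₂ : D ⥤ C} {L₃ : E ⥤ F} {R₃ : F ⥤ E}
    (adj₁ : L₁ ⊣ R₁) (adj₂ : L₂ ⊣ R₂) (adj₃ : L₃ ⊣ R₃)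
    {G₁ : A ⥤ C} {G₂ : C ⥤ E} {G : A ⥤ E} {H₁ : B ⥤ D} {H₂ : D ⥤ F} {H : B ⥤ F}
    (hG : G = G₁ ⋙ G₂) (hH : H = H₁ ⋙ H₂)
    (h₁ : G₁ ⋙ L₂ = L₁ ⋙ H₁) (h₂ : G₂ ⋙ L₃ = L₂ ⋙ H₂) (h : G ⋙ L₃ = L₁ ⋙ H) :
    mateEquiv adj₁ adj₃ (.mk _ _ _ _ (eqToHom h)) =
      eqToHom (by rw [hG]; rfl) ≫
        whiskerRight (mateEquiv adj₁ adj₂ (.mk _ _ _ _ (eqToHom h₁))) G₂ ≫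
          whiskerLeft H₁ (mateEquiv adj₂ adj₃ (.mk _ _ _ _ (eqToHom h₂))) ≫
            eqToHom (by rw [hH]; rfl) := by
  subst hG hH
  have hpaste : (eqToHom h : TwoSquare (G₁ ⋙ G₂) L₁ L₃ (H₁ ⋙ H₂)) =
      .mk _ _ _ _ (eqToHom h₁) ≫ₕ .mk _ _ _ _ (eqToHom h₂) := by
    ext a
    simp [TwoSquare.hComp, eqToHom_app, eqToHom_map]
  rw [hpaste, mateEquiv_vcomp adj₁ adj₂ adj₃]
  ext b
  simp [TwoSquare.vComp, mateEquiv_apply]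

end Mates

section

variable {I : Type*} [Category I] {X Y : I ⥤ Cat}
  (f : X ⟶ Y)
  (g : ∀ a : I, ↥(Y.obj a) ⥤ ↥(X.obj a))
  (adj : ∀ a : I, ((f.app a).toFunctor : ↥(X.obj a) ⥤ ↥(Y.obj a)) ⊣ g a)

lemma gbar_eq_mateEquiv {a b : I} (r : a ⟶ b) :
    gbar f g adj r = mateEquiv (adj a) (adj b) (.mk _ _ _ _ (eqToHom (natEq f r))) := by
  ext y
  simp [gbar, mateEquiv_apply, eqToHom_app, eqToHom_map]

/-- Pointwise adjoints assemble to a lax natural transformation: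
the 2-cells `ḡ_r` defined from the units, counits and the strict naturality of `f`
satisfy the unit and composition axioms of a lax natural transformation `Y ⇒ X`. -/
theorem gbar_lax_natural :
    (∀ a : I,
      gbar f g adj (𝟙 a) =
        eqToHom (by rw [X.map_id, Y.map_id]; rfl)) ∧
    (∀ {a b c : I} (r : a ⟶ b) (s : b ⟶ c),
      gbar f g adj (r ≫ s) =
        eqToHom (by rw [X.map_comp]; rfl) ≫
          Functor.whiskerRight (gbar f g adj r) (((X.map s).toFunctor : ↥(X.obj b) ⥤ ↥(X.obj c))) ≫
            Functor.whiskerLeft (((Y.map r).toFunctor : ↥(Y.obj a) ⥤ ↥(Y.obj b))) (gbar f g adj s) ≫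
              eqToHom (by rw [Y.map_comp]; rfl)) := by
  refine ⟨fun a => ?_, fun r s => ?_⟩
  · rw [gbar_eq_mateEquiv]
    exact mateEquiv_eqToHom_of_eq_id (adj a) (congrArg Cat.Hom.toFunctor (X.map_id a))
      (congrArg Cat.Hom.toFunctor (Y.map_id a)) _
  · simp only [gbar_eq_mateEquiv]
    exact mateEquiv_eqToHom_of_eq_comp _ _ _ (congrArg Cat.Hom.toFunctor (X.map_comp r s))
      (congrArg Cat.Hom.toFunctor (Y.map_comp r s)) _ _ _

end
end
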